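/- A reaction network is not strongly endotactic if and only if there exists a nonzero vector w ∈ ℝ^m and a partition of the reaction set R into disjoint sets R₀, R₋, R₊ such that: w·(y'(i) − y(i)) = 0 for all i ∈ R₀; w·(y'(i) − y(i)) < 0 for all i ∈ R₋; R₋ is nonempty; and either (a) R₀ is nonempty and w·(y(i) − y(j)) < 0 for all i ∈ R₀ and j ∈ R₋ ∪ R₊, or (b) R₀ is empty and w·(y(i) − y(j)) ≤ 0 for all i ∈ R₋ and j ∈ R₊. -/

import Mathlib

/-!
Only the direction `w` and the two real-valued maps `i ↦ w·y(i)` (the source height `s`) and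
`i ↦ w·(y'(i) − y(i))` (the drift `d`) matter. Strong endotacticity along `w` fails exactly
when some reaction drifts downwards but no reaction with a lowest source drifts upwards from strictly
below it. If a lowest reaction itself drifts downwards, it alone forms `R₋` with `R₀ = ∅`; otherwise
all lowest reactions have zero drift and form `R₀`, strictly below every other source.
-/

def dot {m : ℕ} (w v : Fin m → ℝ) : ℝ := ∑ k, w k * v k

def StronglyEndotactic {m : ℕ} {ι : Type*} [Fintype ι] (y y' : ι → Fin m → ℝ) : Prop :=
  ∀ w : Fin m → ℝ, ∀ i : ι, dot w (y' i - y i) < 0 →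
    ∃ j : ι, dot w (y j - y i) < 0 ∧ 0 < dot w (y' j - y j) ∧
      ∀ k : ι, 0 ≤ dot w (y k - y j)

section Along

variable {ι : Type*} (s d : ι → ℝ)

def StronglyEndotacticAlong : Prop :=
  ∀ i, d i < 0 → ∃ j, s j < s i ∧ 0 < d j ∧ ∀ k, s j ≤ s k

def IsObstructingPartition [DecidableEq ι] [Fintype ι] (R0 Rm Rp : Finset ι) : Prop :=
  Disjoint R0 Rm ∧ Disjoint R0 Rp ∧ Disjoint Rm Rp ∧
  R0 ∪ Rm ∪ Rp = Finset.univ ∧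
  (∀ i ∈ R0, d i = 0) ∧
  (∀ i ∈ Rm, d i < 0) ∧
  Rm.Nonempty ∧
  ((R0.Nonempty ∧ ∀ i ∈ R0, ∀ j ∈ Rm ∪ Rp, s i < s j) ∨
   (R0 = ∅ ∧ ∀ i ∈ Rm, ∀ j ∈ Rp, s i ≤ s j))

variable {s d}

theorem stronglyEndotacticAlong_of_nonneg (hd : ∀ i, 0 ≤ d i) : StronglyEndotacticAlong s d :=
  fun i hi => absurd hi (hd i).not_gt

theorem not_stronglyEndotacticAlong_of_isObstructingPartition [DecidableEq ι] [Fintype ι]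
    {R0 Rm Rp : Finset ι} (hR : IsObstructingPartition s d R0 Rm Rp) :
    ¬ StronglyEndotacticAlong s d := by
  obtain ⟨-, -, -, hcover, hR0, hRm, ⟨i, hi⟩, hSE3⟩ := hR
  intro hSE
  obtain ⟨j, hji, hj, hmin⟩ := hSE i (hRm i hi)
  have hj_mem : j ∈ R0 ∪ Rm ∪ Rp := hcover ▸ Finset.mem_univ j
  have hjR0 : j ∉ R0 := fun h => hj.ne' (hR0 j h)
  have hjRm : j ∉ Rm := fun h => hj.not_gt (hRm j h)
  have hjRp : j ∈ Rp := by simpa [hjR0, hjRm] using hj_mem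
  rcases hSE3 with ⟨⟨k, hk⟩, hlow⟩ | ⟨-, hle⟩
  · exact (hmin k).not_gt (hlow k hk j (Finset.mem_union_right _ hjRp))
  · exact hji.not_ge (hle i hi j hjRp)

theorem isObstructingPartition_of_isMin_of_neg [DecidableEq ι] [Fintype ι] {j : ι}
    (hmin : ∀ k, s j ≤ s k) (hj : d j < 0) :
    IsObstructingPartition s d ∅ {j} (Finset.univ \ {j}) := by
  refine ⟨by simp, by simp, Finset.disjoint_sdiff, by simp, by simp, by simpa using hj,
    Finset.singleton_nonempty j, Or.inr ⟨rfl, ?_⟩⟩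
  simp only [Finset.mem_singleton]
  rintro i rfl k -
  exact hmin k

theorem isObstructingPartition_of_isMin_imp_eq_zero [DecidableEq ι] [Fintype ι] {i : ι}
    (hi : d i < 0) (hzero : ∀ j, (∀ k, s j ≤ s k) → d j = 0) :
    IsObstructingPartition s d {j | ∀ k, s j ≤ s k} {j | d j < 0}
      {j | ¬ (∀ k, s j ≤ s k) ∧ ¬ d j < 0} := by
  have : Nonempty ι := ⟨i⟩
  obtain ⟨j₀, hj₀⟩ := Finite.exists_min s
  refine ⟨?_, ?_, ?_, ?_, ?_, ?_, ⟨i, by simpa using hi⟩, Or.inl ⟨⟨j₀, by simpa using hj₀⟩, ?_⟩⟩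
  · exact Finset.disjoint_filter.mpr fun j _ hj => (hzero j hj).not_lt
  · exact Finset.disjoint_filter.mpr fun j _ hj h => h.1 hj
  · exact Finset.disjoint_filter.mpr fun j _ hj h => h.2 hj
  · ext j
    simp only [Finset.mem_union, Finset.mem_filter, Finset.mem_univ, true_and]
    tauto
  · simpa using hzero
  · simp
  · intro a ha b hb
    have hb' : ¬ ∀ k, s b ≤ s k := by
      simp only [Finset.mem_union, Finset.mem_filter, Finset.mem_univ, true_and] at hb
      rcases hb with hb | hb
      · exact fun h => (hzero b h).not_lt hb
      · exact hb.1
    simp only [Finset.mem_filter, Finset.mem_univ, true_and] at ha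
    push Not at hb'
    obtain ⟨k, hk⟩ := hb'
    exact (ha k).trans_lt hk

/-- If no lowest reaction drifts downwards, failure of strong endotacticity forces every lowest
reaction to have zero drift: one drifting upwards would lie strictly below the downward one. -/
theorem isMin_imp_eq_zero_of_not_stronglyEndotacticAlong {i : ι} (hi : d i < 0)
    (hno : ∀ j, s j < s i → 0 < d j → ∃ k, s k < s j)
    (hlow : ∀ j, (∀ k, s j ≤ s k) → 0 ≤ d j) :
    ∀ j, (∀ k, s j ≤ s k) → d j = 0 := by
  intro j hj
  refine le_antisymm (not_lt.mp fun hpos => ?_) (hlow j hj)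
  have hji : s j < s i := lt_of_le_of_ne (hj i) fun hij => (hlow i fun k => hij ▸ hj k).not_gt hi
  obtain ⟨k, hk⟩ := hno j hji hpos
  exact (hj k).not_gt hk

theorem not_stronglyEndotacticAlong_iff [DecidableEq ι] [Fintype ι] :
    ¬ StronglyEndotacticAlong s d ↔ ∃ R0 Rm Rp, IsObstructingPartition s d R0 Rm Rp := by
  refine ⟨fun h => ?_, fun ⟨_, _, _, hR⟩ => not_stronglyEndotacticAlong_of_isObstructingPartition hR⟩
  simp only [StronglyEndotacticAlong, not_forall, not_exists, not_and, not_le] at h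
  obtain ⟨i, hi, hno⟩ := h
  by_cases hlow : ∃ j, (∀ k, s j ≤ s k) ∧ d j < 0
  · obtain ⟨j, hmin, hj⟩ := hlow
    exact ⟨_, _, _, isObstructingPartition_of_isMin_of_neg hmin hj⟩
  · push Not at hlow
    exact ⟨_, _, _, isObstructingPartition_of_isMin_imp_eq_zero hi
      (isMin_imp_eq_zero_of_not_stronglyEndotacticAlong hi hno hlow)⟩

end Along

theorem dot_sub {m : ℕ} (w a b : Fin m → ℝ) : dot w (a - b) = dot w a - dot w b :=
  dotProduct_sub w a b

theorem stronglyEndotactic_iff_forall_along {m : ℕ} {ι : Type*} [Fintype ι]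
    (y y' : ι → Fin m → ℝ) :
    StronglyEndotactic y y' ↔
      ∀ w, StronglyEndotacticAlong (fun i => dot w (y i)) (fun i => dot w (y' i - y i)) := by
  simp only [StronglyEndotactic, StronglyEndotacticAlong, dot_sub, sub_neg, sub_nonneg]

/-- A network is not strongly endotactic iff there is a nonzero `w` and a partition
`R₀, R₋, R₊` satisfying E1, E2, E4 and one of SE3(a), SE3(b). -/
theorem not_stronglyEndotactic_iff {m : ℕ} {ι : Type*} [Fintype ι] [DecidableEq ι]
    (y y' : ι → Fin m → ℝ) :
    ¬ StronglyEndotactic y y' ↔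
      ∃ w : Fin m → ℝ, w ≠ 0 ∧
        ∃ R0 Rm Rp : Finset ι,
          Disjoint R0 Rm ∧ Disjoint R0 Rp ∧ Disjoint Rm Rp ∧
          R0 ∪ Rm ∪ Rp = Finset.univ ∧
          (∀ i ∈ R0, dot w (y' i - y i) = 0) ∧
          (∀ i ∈ Rm, dot w (y' i - y i) < 0) ∧
          Rm.Nonempty ∧
          ((R0.Nonempty ∧ ∀ i ∈ R0, ∀ j ∈ Rm ∪ Rp, dot w (y i - y j) < 0) ∨
           (R0 = ∅ ∧ ∀ i ∈ Rm, ∀ j ∈ Rp, dot w (y i - y j) ≤ 0)) := by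
  have along_zero : StronglyEndotacticAlong (fun i => dot 0 (y i)) (fun i => dot 0 (y' i - y i)) :=
    stronglyEndotacticAlong_of_nonneg fun i => (zero_dotProduct (y' i - y i)).ge
  rw [stronglyEndotactic_iff_forall_along, not_forall]
  have ne_zero : ∀ w : Fin m → ℝ, ¬ StronglyEndotacticAlong (fun i => dot w (y i))
      (fun i => dot w (y' i - y i)) → w ≠ 0 := by
    rintro w h rfl
    exact h along_zero
  refine exists_congr fun w => ⟨fun h => ⟨ne_zero w h, ?_⟩, fun h => ?_⟩ <;>
    simp only [not_stronglyEndotacticAlong_iff, IsObstructingPartition, dot_sub, sub_neg,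
      sub_nonpos] at h ⊢
  exacts [h, h.2]
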